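/- arXiv:2309.07802 — 4 statements merged into one kernel-verified Lean document; each statement's English description precedes it below -/
import Mathlib

section
/- Let E, F, G, e, f, g, a, b be real numbers with a, b > 0, E = a², G = b², and EG − F² > 0, and let θ_u, θ_v be angles with a·b·cos(θ_u − θ_v) = F. Define κ₁ = (G·e·sin²θ_v + E·g·sin²θ_u − 2f·a·b·sinθ_u·sinθ_v)/(EG − F²) and κ₂ = (G·e·cos²θ_v + E·g·cos²θ_u − 2f·a·b·cosθ_u·cosθ_v)/(EG − F²). Then κ₁ + κ₂ = (G·e + E·g − 2f·F)/(EG − F²); in particular the sum is independent of θ_u and θ_v. -/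
open Real

theorem sin_form_add_cos_form (p q r u v : ℝ) :
    (p * sin v ^ 2 + q * sin u ^ 2 - 2 * r * sin u * sin v)
      + (p * cos v ^ 2 + q * cos u ^ 2 - 2 * r * cos u * cos v)
      = p + q - 2 * r * cos (u - v) := by
  rw [cos_sub]
  linear_combination p * sin_sq_add_cos_sq v + q * sin_sq_add_cos_sq u

theorem stmt13_general (E F G e f g a b θu θv : ℝ)
    (hF : a * b * Real.cos (θu - θv) = F) :
    (G * e * Real.sin θv ^ 2 + E * g * Real.sin θu ^ 2
        - 2 * f * a * b * Real.sin θu * Real.sin θv) / (E * G - F ^ 2)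
      + (G * e * Real.cos θv ^ 2 + E * g * Real.cos θu ^ 2
        - 2 * f * a * b * Real.cos θu * Real.cos θv) / (E * G - F ^ 2)
      = (G * e + E * g - 2 * f * F) / (E * G - F ^ 2) := by
  rw [← add_div]
  congr 1
  rw [← hF]
  linear_combination sin_form_add_cos_form (G * e) (E * g) (f * a * b) θu θv

theorem stmt13 (E F G e f g a b θu θv : ℝ) (ha : 0 < a) (hb : 0 < b)
    (hE : E = a ^ 2) (hG : G = b ^ 2) (hpos : 0 < E * G - F ^ 2)
    (hF : a * b * Real.cos (θu - θv) = F) :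
    (G * e * Real.sin θv ^ 2 + E * g * Real.sin θu ^ 2
        - 2 * f * a * b * Real.sin θu * Real.sin θv) / (E * G - F ^ 2)
      + (G * e * Real.cos θv ^ 2 + E * g * Real.cos θu ^ 2
        - 2 * f * a * b * Real.cos θu * Real.cos θv) / (E * G - F ^ 2)
      = (G * e + E * g - 2 * f * F) / (E * G - F ^ 2) :=
  stmt13_general E F G e f g a b θu θv hF
end

section
/- Fix h > 0 and a point (x₀, y₀) ∈ ℝ². For (x,y) ≠ (x₀,y₀) define ρ⃗ = (x − x₀, y − y₀, 0), ρ = |ρ⃗|, r = √(ρ² + h²), ρ̂ = ρ⃗/ρ, ρ̃ = e_z × ρ̂, and the vector field f(x,y) = (ρ/(4π(r + h)))·ρ̃. Then the z-component of the curl of f equals the Laplace Green function: (∇ × f)·e_z = 1/(4πr). -/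
open Real

/-!
Both partial derivatives are instances of the derivative of the profile `u ↦ u / (√(u² + c) + h)`,
which at `r = √(u² + c)` equals `(c + h r) / (r (r + h)²)`. With `a = x - x₀`, `b = y - y₀`, taking
`c = b² + h²` and `c = a² + h²`, the two numerators add up to `a² + b² + 2h² + 2hr = (r + h)²` because `r² = a² + b² + h²`,
leaving `1 / r`.
-/

lemma hasDerivAt_div_sqrt_sq_add_add {c h : ℝ} (hc : 0 < c) (hh : 0 ≤ h) (u : ℝ) :
    HasDerivAt (fun u => u / (√(u ^ 2 + c) + h))
      ((c + h * √(u ^ 2 + c)) / (√(u ^ 2 + c) * (√(u ^ 2 + c) + h) ^ 2)) u := by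
  have hpos : 0 < u ^ 2 + c := by positivity
  have hsq : √(u ^ 2 + c) ^ 2 = u ^ 2 + c := Real.sq_sqrt hpos.le
  have hden : √(u ^ 2 + c) + h ≠ 0 := by positivity
  have hsqrt : HasDerivAt (fun u => √(u ^ 2 + c)) (2 * u / (2 * √(u ^ 2 + c))) u := by
    simpa using ((hasDerivAt_pow 2 u).add_const c).sqrt hpos.ne'
  refine ((hasDerivAt_id' u).div (hsqrt.add_const h) hden).congr_deriv ?_
  field_simp
  linear_combination hsq

theorem stmt16_general (h x0 y0 : ℝ) (hh : 0 < h) (x y : ℝ) :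
    deriv (fun t : ℝ =>
        (t - x0) / (4 * π * (Real.sqrt ((t - x0) ^ 2 + (y - y0) ^ 2 + h ^ 2) + h))) x
      - deriv (fun t : ℝ =>
        (-(t - y0)) / (4 * π * (Real.sqrt ((x - x0) ^ 2 + (t - y0) ^ 2 + h ^ 2) + h))) y
    = 1 / (4 * π * Real.sqrt ((x - x0) ^ 2 + (y - y0) ^ 2 + h ^ 2)) := by
  set a := x - x0
  set b := y - y0
  have hfx : (fun t => (t - x0) / (4 * π * (√((t - x0) ^ 2 + b ^ 2 + h ^ 2) + h))) =
      fun t => (4 * π)⁻¹ * ((t - x0) / (√((t - x0) ^ 2 + (b ^ 2 + h ^ 2)) + h)) := by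
    funext t
    rw [add_assoc, div_mul_eq_div_div_swap]
    ring
  have hfy : (fun t => (-(t - y0)) / (4 * π * (√(a ^ 2 + (t - y0) ^ 2 + h ^ 2) + h))) =
      fun t => -(4 * π)⁻¹ * ((t - y0) / (√((t - y0) ^ 2 + (a ^ 2 + h ^ 2)) + h)) := by
    funext t
    rw [show a ^ 2 + (t - y0) ^ 2 + h ^ 2 = (t - y0) ^ 2 + (a ^ 2 + h ^ 2) by ring,
      div_mul_eq_div_div_swap]
    ring
  have hra : a ^ 2 + (b ^ 2 + h ^ 2) = a ^ 2 + b ^ 2 + h ^ 2 := by ring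
  have hrb : b ^ 2 + (a ^ 2 + h ^ 2) = a ^ 2 + b ^ 2 + h ^ 2 := by ring
  rw [hfx, hfy,
    (((hasDerivAt_div_sqrt_sq_add_add (by positivity) hh.le a).comp_sub_const x x0).const_mul
      _).deriv,
    (((hasDerivAt_div_sqrt_sq_add_add (by positivity) hh.le b).comp_sub_const y y0).const_mul
      _).deriv, hra, hrb]
  have hpos : 0 < a ^ 2 + b ^ 2 + h ^ 2 := by positivity
  have hsq : √(a ^ 2 + b ^ 2 + h ^ 2) ^ 2 = a ^ 2 + b ^ 2 + h ^ 2 := Real.sq_sqrt hpos.le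
  field_simp
  linear_combination -hsq

theorem stmt16 (h x0 y0 : ℝ) (hh : 0 < h) (x y : ℝ) (hxy : (x, y) ≠ (x0, y0)) :
    deriv (fun t : ℝ =>
        (t - x0) / (4 * π * (Real.sqrt ((t - x0) ^ 2 + (y - y0) ^ 2 + h ^ 2) + h))) x
      - deriv (fun t : ℝ =>
        (-(t - y0)) / (4 * π * (Real.sqrt ((x - x0) ^ 2 + (t - y0) ^ 2 + h ^ 2) + h))) y
    = 1 / (4 * π * Real.sqrt ((x - x0) ^ 2 + (y - y0) ^ 2 + h ^ 2)) :=
  stmt16_general h x0 y0 hh x y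
end

section
/- Fix h > 0 and (x₀, y₀) ∈ ℝ². For (x,y) ≠ (x₀,y₀) define ρ⃗ = (x − x₀, y − y₀, 0), ρ = |ρ⃗|, r = √(ρ² + h²), ρ̂ = ρ⃗/ρ, ρ̃ = e_z × ρ̂, and f'(x,y) = (ρ/(4π r (r + h)))·ρ̃. Then (∇ × f')·e_z = h/(4π r³). -/
/-! The field f' is tangential with magnitude ρ / (4π r (r + h)), so its Cartesian components are
±u / (4π s (s + h)) with s = √(u² + c + h²), where u is one coordinate of ρ⃗ and c the square of the
other. Differentiating both and adding, ρₓ² + ρᵧ² = r² - h² collapses the numerator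
2r²(r + h) - (r² - h²)(2r + h) to h (r + h)². -/

open Real

noncomputable def stokesProfile (h c u : ℝ) : ℝ :=
  u / (4 * π * √(u ^ 2 + c + h ^ 2) * (√(u ^ 2 + c + h ^ 2) + h))

theorem hasDerivAt_stokesProfile {h c : ℝ} (hh : 0 < h) (hc : 0 ≤ c) (u : ℝ) :
    HasDerivAt (stokesProfile h c)
      ((√(u ^ 2 + c + h ^ 2) ^ 2 * (√(u ^ 2 + c + h ^ 2) + h)
          - u ^ 2 * (2 * √(u ^ 2 + c + h ^ 2) + h))
        / (4 * π * √(u ^ 2 + c + h ^ 2) ^ 3 * (√(u ^ 2 + c + h ^ 2) + h) ^ 2)) u := by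
  have hq : 0 < u ^ 2 + c + h ^ 2 := by positivity
  have hs : 0 < √(u ^ 2 + c + h ^ 2) := sqrt_pos.mpr hq
  have hsqrt : HasDerivAt (fun t => √(t ^ 2 + c + h ^ 2)) (u / √(u ^ 2 + c + h ^ 2)) u := by
    simpa [mul_div_mul_left] using
      (((hasDerivAt_pow 2 u).add_const c).add_const (h ^ 2)).sqrt hq.ne'
  have hden := (hsqrt.const_mul (4 * π)).fun_mul (hsqrt.add_const h)
  refine ((hasDerivAt_id' u).fun_div hden (by positivity)).congr_deriv ?_
  field_simp
  ring

theorem stmt17_general (h x0 y0 : ℝ) (hh : 0 < h) (x y : ℝ) :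
    deriv (fun t : ℝ =>
        (t - x0) / (4 * π * Real.sqrt ((t - x0) ^ 2 + (y - y0) ^ 2 + h ^ 2)
          * (Real.sqrt ((t - x0) ^ 2 + (y - y0) ^ 2 + h ^ 2) + h))) x
      - deriv (fun t : ℝ =>
        (-(t - y0)) / (4 * π * Real.sqrt ((x - x0) ^ 2 + (t - y0) ^ 2 + h ^ 2)
          * (Real.sqrt ((x - x0) ^ 2 + (t - y0) ^ 2 + h ^ 2) + h))) y
    = h / (4 * π * Real.sqrt ((x - x0) ^ 2 + (y - y0) ^ 2 + h ^ 2) ^ 3) := by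
  have hx : (fun t : ℝ =>
        (t - x0) / (4 * π * √((t - x0) ^ 2 + (y - y0) ^ 2 + h ^ 2)
          * (√((t - x0) ^ 2 + (y - y0) ^ 2 + h ^ 2) + h)))
      = fun t => stokesProfile h ((y - y0) ^ 2) (t - x0) := rfl
  have hy : (fun t : ℝ =>
        (-(t - y0)) / (4 * π * √((x - x0) ^ 2 + (t - y0) ^ 2 + h ^ 2)
          * (√((x - x0) ^ 2 + (t - y0) ^ 2 + h ^ 2) + h)))
      = fun t => -stokesProfile h ((x - x0) ^ 2) (t - y0) := by
    funext t
    rw [stokesProfile, neg_div, add_comm ((x - x0) ^ 2)]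
  rw [hx, hy, deriv.fun_neg, deriv_comp_sub_const, deriv_comp_sub_const,
    (hasDerivAt_stokesProfile hh (sq_nonneg _) _).deriv,
    (hasDerivAt_stokesProfile hh (sq_nonneg _) _).deriv, add_comm ((y - y0) ^ 2)]
  set r := √((x - x0) ^ 2 + (y - y0) ^ 2 + h ^ 2)
  have hq : 0 < (x - x0) ^ 2 + (y - y0) ^ 2 + h ^ 2 := by positivity
  have hr : 0 < r := sqrt_pos.mpr hq
  have hr2 : r ^ 2 = (x - x0) ^ 2 + (y - y0) ^ 2 + h ^ 2 := sq_sqrt hq.le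
  field_simp
  linear_combination (2 * r + h) * hr2

theorem stmt17 (h x0 y0 : ℝ) (hh : 0 < h) (x y : ℝ) (hxy : (x, y) ≠ (x0, y0)) :
    deriv (fun t : ℝ =>
        (t - x0) / (4 * π * Real.sqrt ((t - x0) ^ 2 + (y - y0) ^ 2 + h ^ 2)
          * (Real.sqrt ((t - x0) ^ 2 + (y - y0) ^ 2 + h ^ 2) + h))) x
      - deriv (fun t : ℝ =>
        (-(t - y0)) / (4 * π * Real.sqrt ((x - x0) ^ 2 + (t - y0) ^ 2 + h ^ 2)
          * (Real.sqrt ((x - x0) ^ 2 + (t - y0) ^ 2 + h ^ 2) + h))) y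
    = h / (4 * π * Real.sqrt ((x - x0) ^ 2 + (y - y0) ^ 2 + h ^ 2) ^ 3) :=
  stmt17_general h x0 y0 hh x y
end

section
/- Fix a real wavenumber k ≠ 0, h > 0, and (x₀, y₀) ∈ ℝ². For (x,y) ≠ (x₀,y₀) define ρ⃗ = (x − x₀, y − y₀, 0), ρ = |ρ⃗|, r = √(ρ² + h²), ρ̂ = ρ⃗/ρ, ρ̃ = e_z × ρ̂, and the complex vector field f_H(x,y) = ((e^{ikr} − e^{ikh})/(4π i k ρ))·ρ̃. Then (∇ × f_H)·e_z = e^{ikr}/(4πr) − (e^{ikh}/(4π))·0, i.e. the z-component of the curl of f_H equals e^{ikr}/(4πr). -/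
/-!
Write `s = ρ²` and `F(s) = (e^{ik√(s+h²)} - e^{ikh}) / (4πik)`. Then `f_H = F(ρ²)/ρ² · (e_z × ρ⃗)` is
an azimuthal field, and for any profile `F` the curl of `F(ρ²)/ρ² · (e_z × ρ⃗)` is `2 F'(ρ²)`
(product and quotient rules, using `∂ρ²/∂x = 2(x - x₀)`). The chain rule gives
`2 F'(s) = e^{ik√(s+h²)} / (4π√(s+h²))`, where the factor `ik` cancels.
-/

open Real Complex

theorem hasDerivAt_sub_mul_comp_div (F : ℝ → ℂ) {F' : ℂ} {q : ℝ → ℝ} {x x0 : ℝ}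
    (hq : HasDerivAt q (2 * (x - x0)) x) (hqx : q x ≠ 0) (hF : HasDerivAt F F' (q x)) :
    HasDerivAt (fun t : ℝ => ((t : ℂ) - x0) * F (q t) / (q t : ℂ))
      (F (q x) / q x + 2 * ((x : ℂ) - x0) ^ 2 * (F' / q x - F (q x) / (q x : ℂ) ^ 2)) x := by
  have hu : HasDerivAt (fun t : ℝ => (t : ℂ) - x0) 1 x :=
    (hasDerivAt_id x).ofReal_comp.sub_const _
  have hFq : HasDerivAt (fun t => F (q t)) (2 * ((x : ℂ) - x0) * F') x := by
    simpa [Function.comp_def] using hF.scomp x hq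
  have hqx' : (q x : ℂ) ≠ 0 := ofReal_ne_zero.mpr hqx
  refine ((hu.fun_mul hFq).div hq.ofReal_comp hqx').congr_deriv ?_
  push_cast
  field_simp
  ring

theorem deriv_sub_deriv_azimuthal_eq_two_mul (F : ℝ → ℂ) {F' : ℂ} {x0 y0 x y : ℝ}
    (hs : (x - x0) ^ 2 + (y - y0) ^ 2 ≠ 0)
    (hF : HasDerivAt F F' ((x - x0) ^ 2 + (y - y0) ^ 2)) :
    deriv (fun t : ℝ => ((t : ℂ) - x0) * F ((t - x0) ^ 2 + (y - y0) ^ 2)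
        / (((t - x0) ^ 2 + (y - y0) ^ 2 : ℝ) : ℂ)) x
      - deriv (fun t : ℝ => -((t : ℂ) - y0) * F ((x - x0) ^ 2 + (t - y0) ^ 2)
        / (((x - x0) ^ 2 + (t - y0) ^ 2 : ℝ) : ℂ)) y
      = 2 * F' := by
  have hqx : HasDerivAt (fun t => (t - x0) ^ 2 + (y - y0) ^ 2) (2 * (x - x0)) x := by
    simpa using (((hasDerivAt_id x).sub_const x0).pow 2).add_const ((y - y0) ^ 2)
  have hqy : HasDerivAt (fun t => (x - x0) ^ 2 + (t - y0) ^ 2) (2 * (y - y0)) y := by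
    simpa using (((hasDerivAt_id y).sub_const y0).pow 2).const_add ((x - x0) ^ 2)
  have hneg : (fun t : ℝ => -((t : ℂ) - y0) * F ((x - x0) ^ 2 + (t - y0) ^ 2)
      / (((x - x0) ^ 2 + (t - y0) ^ 2 : ℝ) : ℂ))
      = fun t : ℝ => -(((t : ℂ) - y0) * F ((x - x0) ^ 2 + (t - y0) ^ 2)
        / (((x - x0) ^ 2 + (t - y0) ^ 2 : ℝ) : ℂ)) := by
    funext t
    ring
  rw [hneg, deriv.fun_neg, sub_neg_eq_add, (hasDerivAt_sub_mul_comp_div F hqx hs hF).deriv,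
    (hasDerivAt_sub_mul_comp_div F hqy hs hF).deriv]
  have hs' : (((x - x0) ^ 2 + (y - y0) ^ 2 : ℝ) : ℂ) ≠ 0 := ofReal_ne_zero.mpr hs
  field_simp
  push_cast
  ring

theorem hasDerivAt_cexp_mul_sqrt_add (k h : ℝ) {s : ℝ} (hs : 0 < s + h ^ 2) :
    HasDerivAt (fun s : ℝ => Complex.exp (I * k * Real.sqrt (s + h ^ 2)))
      (I * k / (2 * Real.sqrt (s + h ^ 2)) * Complex.exp (I * k * Real.sqrt (s + h ^ 2))) s := by
  have hsqrt := ((hasDerivAt_id' s).add_const (h ^ 2)).sqrt hs.ne'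
  refine ((hsqrt.ofReal_comp.const_mul (I * k)).cexp).congr_deriv ?_
  push_cast
  ring

theorem stmt18_general (k h x0 y0 : ℝ) (hk : k ≠ 0) (x y : ℝ)
    (hxy : (x, y) ≠ (x0, y0)) :
    deriv (fun t : ℝ =>
        ((t - x0) : ℂ) *
          (Complex.exp (I * k * Real.sqrt ((t - x0) ^ 2 + (y - y0) ^ 2 + h ^ 2))
            - Complex.exp (I * k * h))
          / (4 * π * I * k * (((t - x0) ^ 2 + (y - y0) ^ 2 : ℝ) : ℂ))) x
      - deriv (fun t : ℝ =>
        (-(t - y0) : ℂ) *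
          (Complex.exp (I * k * Real.sqrt ((x - x0) ^ 2 + (t - y0) ^ 2 + h ^ 2))
            - Complex.exp (I * k * h))
          / (4 * π * I * k * (((x - x0) ^ 2 + (t - y0) ^ 2 : ℝ) : ℂ))) y
    = Complex.exp (I * k * Real.sqrt ((x - x0) ^ 2 + (y - y0) ^ 2 + h ^ 2))
        / (4 * π * Real.sqrt ((x - x0) ^ 2 + (y - y0) ^ 2 + h ^ 2)) := by
  set s := (x - x0) ^ 2 + (y - y0) ^ 2
  have hs : 0 < s := by
    have hne : x - x0 ≠ 0 ∨ y - y0 ≠ 0 := by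
      by_contra! h0
      exact hxy (Prod.ext (sub_eq_zero.mp h0.1) (sub_eq_zero.mp h0.2))
    rcases hne with hne | hne <;> positivity
  have hR : 0 < Real.sqrt (s + h ^ 2) := Real.sqrt_pos.mpr (by positivity)
  have hF := ((hasDerivAt_cexp_mul_sqrt_add k h (s := s) (by positivity)).sub_const
    (Complex.exp (I * k * h))).div_const (4 * π * I * k)
  convert deriv_sub_deriv_azimuthal_eq_two_mul _ hs.ne' hF using 1
  · congr 1 <;> congr 1 <;> funext t <;> ring
  · have : (k : ℂ) ≠ 0 := ofReal_ne_zero.mpr hk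
    have : (Real.sqrt (s + h ^ 2) : ℂ) ≠ 0 := ofReal_ne_zero.mpr hR.ne'
    field_simp

theorem stmt18 (k h x0 y0 : ℝ) (hk : k ≠ 0) (hh : 0 < h) (x y : ℝ)
    (hxy : (x, y) ≠ (x0, y0)) :
    deriv (fun t : ℝ =>
        ((t - x0) : ℂ) *
          (Complex.exp (I * k * Real.sqrt ((t - x0) ^ 2 + (y - y0) ^ 2 + h ^ 2))
            - Complex.exp (I * k * h))
          / (4 * π * I * k * (((t - x0) ^ 2 + (y - y0) ^ 2 : ℝ) : ℂ))) x
      - deriv (fun t : ℝ =>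
        (-(t - y0) : ℂ) *
          (Complex.exp (I * k * Real.sqrt ((x - x0) ^ 2 + (t - y0) ^ 2 + h ^ 2))
            - Complex.exp (I * k * h))
          / (4 * π * I * k * (((x - x0) ^ 2 + (t - y0) ^ 2 : ℝ) : ℂ))) y
    = Complex.exp (I * k * Real.sqrt ((x - x0) ^ 2 + (y - y0) ^ 2 + h ^ 2))
        / (4 * π * Real.sqrt ((x - x0) ^ 2 + (y - y0) ^ 2 + h ^ 2)) :=
  stmt18_general k h x0 y0 hk x y hxy
end
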